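/- There exist a constant C > 0 and an integer N such that the following holds for all n ≥ N. Let G be a finite simple graph on n vertices with a dominating vertex w, in which every two distinct vertices have at most two common neighbors and e(G) ≤ 2n − 3, and let m be the number of edges of G not incident to w. Suppose λ_max(G) ≤ √(n−1) + 2 and that some real eigenvector x of A(G) for λ_max(G) satisfies x_w = 1 and max_u |x_u| = 1. Then |λ_max(G) − √(n−1) − m/(n−1)| ≤ C·m/n^{3/2}. -/

import Mathlib

open Finset
open scoped Matrix
open scoped BigOperators Classical

/-- The largest adjacency eigenvalue of a graph. -/
noncomputable def lamMax {V : Type*} [Fintype V] [DecidableEq V] (G : SimpleGraph V) : ℝ :=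
  sSup (spectrum ℝ (G.adjMatrix ℝ))

lemma rayleigh_le {k : ℕ} (A : Matrix (Fin k) (Fin k) ℝ) (hA : A.IsHermitian) (z : Fin k → ℝ) :
    z ⬝ᵥ (A *ᵥ z) ≤ sSup (spectrum ℝ A) * (z ⬝ᵥ z) := by
  classical
  set U : Matrix (Fin k) (Fin k) ℝ := (hA.eigenvectorUnitary : Matrix (Fin k) (Fin k) ℝ) with hU
  have hstar : star U = Uᵀ := by
    ext i j; simp [Matrix.conjTranspose_apply]
  set y : Fin k → ℝ := Uᵀ *ᵥ z with hy
  have hdiag : Matrix.diagonal (RCLike.ofReal ∘ hA.eigenvalues) = Matrix.diagonal hA.eigenvalues := by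
    congr 1
  have h1 : z ⬝ᵥ (A *ᵥ z) = ∑ i, hA.eigenvalues i * (y i)^2 := by
    conv_lhs => rw [hA.spectral_theorem, Unitary.conjStarAlgAut_apply, ← hU]
    rw [hstar, hdiag, ← Matrix.mulVec_mulVec, ← Matrix.mulVec_mulVec,
      Matrix.dotProduct_mulVec, ← Matrix.mulVec_transpose]
    simp only [← hy, dotProduct, Matrix.mulVec_diagonal]
    apply Finset.sum_congr rfl
    intro i _
    ring
  have h2 : z ⬝ᵥ z = ∑ i, (y i)^2 := by
    have huu : U * Uᵀ = 1 := by
      rw [← hstar]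
      exact Matrix.mem_unitaryGroup_iff.mp (hA.eigenvectorUnitary).2
    calc z ⬝ᵥ z = z ⬝ᵥ ((U * Uᵀ) *ᵥ z) := by rw [huu, Matrix.one_mulVec]
      _ = ∑ i, (y i)^2 := by
          rw [← Matrix.mulVec_mulVec, Matrix.dotProduct_mulVec, ← Matrix.mulVec_transpose]
          simp only [← hy, dotProduct]
          apply Finset.sum_congr rfl
          intro i _; ring
  have hbdd : BddAbove (spectrum ℝ A) := (Matrix.finite_spectrum A).bddAbove
  have h3 : ∀ i, hA.eigenvalues i ≤ sSup (spectrum ℝ A) := fun i =>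
    le_csSup hbdd (hA.eigenvalues_mem_spectrum_real i)
  rw [h1, h2, Finset.mul_sum]
  exact Finset.sum_le_sum fun i _ => mul_le_mul_of_nonneg_right (h3 i) (sq_nonneg _)

lemma handshake_aux {k : ℕ} (G : SimpleGraph (Fin k)) (w : Fin k) :
    ∑ v ∈ Finset.univ.erase w, ((G.neighborFinset v).erase w).card
      = 2 * (G.edgeFinset.filter (fun e => w ∉ e)).card := by
  classical
  let H : SimpleGraph (Fin k) :=
    { Adj := fun a b => G.Adj a b ∧ a ≠ w ∧ b ≠ w
      symm := ⟨by intro a b ⟨h1, h2, h3⟩; exact ⟨h1.symm, h3, h2⟩⟩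
      loopless := ⟨by intro a ⟨h1, _, _⟩; exact G.irrefl h1⟩ }
  have hnbr : ∀ v : Fin k, v ≠ w → H.neighborFinset v = (G.neighborFinset v).erase w := by
    intro v hv
    ext u
    simp only [SimpleGraph.mem_neighborFinset, Finset.mem_erase]
    constructor
    · rintro ⟨h1, _, h3⟩; exact ⟨h3, h1⟩
    · rintro ⟨h1, h2⟩; exact ⟨h2, hv, h1⟩
  have hnbrw : H.neighborFinset w = ∅ := by
    ext u
    simp only [SimpleGraph.mem_neighborFinset, Finset.notMem_empty, iff_false]
    rintro ⟨_, h2, _⟩; exact h2 rfl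
  have hedge : H.edgeFinset = G.edgeFinset.filter (fun e => w ∉ e) := by
    ext e
    induction e using Sym2.ind with
    | _ a b =>
      simp only [SimpleGraph.mem_edgeFinset, Finset.mem_filter, SimpleGraph.mem_edgeSet,
        Sym2.mem_iff]
      constructor
      · rintro ⟨h1, h2, h3⟩
        exact ⟨h1, by rintro (rfl | rfl) <;> simp_all⟩
      · rintro ⟨h1, h2⟩
        push_neg at h2
        exact ⟨h1, fun h => h2.1 h.symm, fun h => h2.2 h.symm⟩
  have hsum := SimpleGraph.sum_degrees_eq_twice_card_edges H
  rw [hedge] at hsum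
  rw [← hsum]
  rw [← Finset.sum_erase_add _ _ (Finset.mem_univ w)]
  simp only [← SimpleGraph.card_neighborFinset_eq_degree, hnbrw, Finset.card_empty, add_zero]
  apply Finset.sum_congr rfl
  intro v hv
  rw [hnbr v (Finset.mem_erase.mp hv).1]

set_option maxHeartbeats 2000000 in
theorem stmt16 :
    ∃ C : ℝ, 0 < C ∧ ∃ N : ℕ, ∀ n : ℕ, N ≤ n →
      ∀ G : SimpleGraph (Fin n), ∀ w : Fin n,
        (∀ v : Fin n, v ≠ w → G.Adj w v) →
        (∀ u v : Fin n, u ≠ v →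
          (G.neighborFinset u ∩ G.neighborFinset v).card ≤ 2) →
        ((G.edgeFinset.card : ℝ) ≤ 2 * (n : ℝ) - 3) →
        ∀ m : ℕ, m = (G.edgeFinset.filter (fun e => w ∉ e)).card →
        lamMax G ≤ Real.sqrt ((n : ℝ) - 1) + 2 →
        ∀ x : Fin n → ℝ,
          (G.adjMatrix ℝ).mulVec x = lamMax G • x →
          x w = 1 →
          (∀ u : Fin n, |x u| ≤ 1) →
          |lamMax G - Real.sqrt ((n : ℝ) - 1) - (m : ℝ) / ((n : ℝ) - 1)| ≤
            C * (m : ℝ) / (n : ℝ) ^ ((3 : ℝ) / 2) := by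
  refine ⟨100, by norm_num, 100, ?_⟩
  intro n hn G w hdom hcommon _hedges m hm hLle x hx hxw hxbound
  classical
  set L : ℝ := lamMax G with hL
  set q : ℝ := Real.sqrt ((n : ℝ) - 1) with hq
  have hn100 : (100 : ℝ) ≤ (n : ℝ) := by exact_mod_cast hn
  have hq0 : 0 ≤ q := Real.sqrt_nonneg _
  have hq2 : q ^ 2 = (n : ℝ) - 1 := Real.sq_sqrt (by linarith)
  have hq_ge : 2 ≤ q := by nlinarith
  -- the neighborhood of w
  have hNw : G.neighborFinset w = Finset.univ.erase w := by
    ext u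
    simp only [SimpleGraph.mem_neighborFinset, Finset.mem_erase, Finset.mem_univ, and_true]
    exact ⟨fun h => h.ne', fun h => hdom u h⟩
  have hcard_erase : (Finset.univ.erase w).card = n - 1 := by
    rw [Finset.card_erase_of_mem (Finset.mem_univ w), Finset.card_univ, Fintype.card_fin]
  have hcard_eraseR : ((Finset.univ.erase w).card : ℝ) = (n : ℝ) - 1 := by
    rw [hcard_erase, Nat.cast_sub (by omega)]; norm_num
  -- Step 1 : q ≤ L via Rayleigh
  have hA : (G.adjMatrix ℝ).IsHermitian := by
    ext i j
    simp [Matrix.conjTranspose_apply, SimpleGraph.adj_comm]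
  have hqL : q ≤ L := by
    set z : Fin n → ℝ := fun v => if v = w then q else 1 with hz
    have hzpos : ∀ v, 0 ≤ z v := by
      intro v; by_cases h : v = w <;> simp [hz, h, hq0]
    have hray := rayleigh_le (G.adjMatrix ℝ) hA z
    have hAz : ∀ v, (G.adjMatrix ℝ *ᵥ z) v = ∑ u ∈ G.neighborFinset v, z u := by
      intro v; rw [SimpleGraph.adjMatrix_mulVec_apply]
    have hdot1 : z ⬝ᵥ ((G.adjMatrix ℝ) *ᵥ z) ≥ 2 * q * ((n : ℝ) - 1) := by
      unfold dotProduct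
      rw [← Finset.sum_erase_add _ _ (Finset.mem_univ w)]
      have hw_term : z w * (G.adjMatrix ℝ *ᵥ z) w = q * ((n : ℝ) - 1) := by
        rw [hAz, hNw]
        have : ∑ u ∈ Finset.univ.erase w, z u = (n : ℝ) - 1 := by
          calc ∑ u ∈ Finset.univ.erase w, z u = ∑ _u ∈ Finset.univ.erase w, (1:ℝ) :=
                Finset.sum_congr rfl (fun u hu => by simp [hz, (Finset.mem_erase.mp hu).1])
            _ = ((Finset.univ.erase w).card : ℝ) := by rw [Finset.sum_const]; simp
            _ = (n : ℝ) - 1 := hcard_eraseR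
        rw [this]; simp [hz]
      have hv_term : ∀ v ∈ Finset.univ.erase w, q ≤ z v * (G.adjMatrix ℝ *ᵥ z) v := by
        intro v hv
        have hvw : v ≠ w := (Finset.mem_erase.mp hv).1
        have hzv : z v = 1 := by simp [hz, hvw]
        rw [hzv, one_mul, hAz]
        have hwmem : w ∈ G.neighborFinset v := by
          rw [SimpleGraph.mem_neighborFinset]; exact (hdom v hvw).symm
        have := Finset.single_le_sum (f := z) (fun u _ => hzpos u) hwmem
        simpa [hz] using this
      have hsum_ge : ((n : ℝ) - 1) * q ≤ ∑ v ∈ Finset.univ.erase w, z v * (G.adjMatrix ℝ *ᵥ z) v := by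
        calc ((n : ℝ) - 1) * q = ∑ _v ∈ Finset.univ.erase w, q := by
              rw [Finset.sum_const, nsmul_eq_mul, hcard_eraseR]
          _ ≤ _ := Finset.sum_le_sum hv_term
      rw [hw_term]
      linarith
    have hdot2 : z ⬝ᵥ z = 2 * ((n : ℝ) - 1) := by
      unfold dotProduct
      rw [← Finset.sum_erase_add _ _ (Finset.mem_univ w)]
      have : ∑ v ∈ Finset.univ.erase w, z v * z v = (n : ℝ) - 1 := by
        calc ∑ v ∈ Finset.univ.erase w, z v * z v = ∑ _v ∈ Finset.univ.erase w, (1:ℝ) :=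
              Finset.sum_congr rfl (fun u hu => by simp [hz, (Finset.mem_erase.mp hu).1])
          _ = ((Finset.univ.erase w).card : ℝ) := by rw [Finset.sum_const]; simp
          _ = (n : ℝ) - 1 := hcard_eraseR
      rw [this]
      simp only [hz, if_pos rfl]
      linear_combination hq2
    rw [hdot2] at hray
    have hrL : sSup (spectrum ℝ (SimpleGraph.adjMatrix ℝ G)) = L := rfl
    rw [hrL] at hray
    have hpos : (0:ℝ) < 2 * ((n : ℝ) - 1) := by linarith
    nlinarith [hray, hdot1, hpos]
  have hLpos : 0 < L := lt_of_lt_of_le (by linarith) hqL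
  -- Step 2 : eigen equations
  have hmv : ∀ v, ∑ u ∈ G.neighborFinset v, x u = L * x v := by
    intro v
    have := congrFun hx v
    rw [SimpleGraph.adjMatrix_mulVec_apply] at this
    simpa using this
  set t : Fin n → ℝ := fun v => ∑ u ∈ (G.neighborFinset v).erase w, x u with ht
  have hwmem : ∀ v, v ≠ w → w ∈ G.neighborFinset v := by
    intro v hv
    rw [SimpleGraph.mem_neighborFinset]; exact (hdom v hv).symm
  have heq : ∀ v, v ≠ w → L * x v = 1 + t v := by
    intro v hv
    rw [← hmv v, ← Finset.add_sum_erase _ _ (hwmem v hv), hxw]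
  have hdeg2 : ∀ v, v ≠ w → (((G.neighborFinset v).erase w).card : ℝ) ≤ 2 := by
    intro v hv
    have hsub : (G.neighborFinset v).erase w ⊆ G.neighborFinset v ∩ G.neighborFinset w := by
      intro u hu
      obtain ⟨hu1, hu2⟩ := Finset.mem_erase.mp hu
      exact Finset.mem_inter.mpr ⟨hu2, (SimpleGraph.mem_neighborFinset _ _ _).mpr (hdom u hu1)⟩
    exact_mod_cast (Finset.card_le_card hsub).trans (hcommon v w hv)
  have ht2 : ∀ v, v ≠ w → |t v| ≤ 2 := by
    intro v hv
    calc |t v| ≤ ∑ u ∈ (G.neighborFinset v).erase w, |x u| := Finset.abs_sum_le_sum_abs _ _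
      _ ≤ ∑ _u ∈ (G.neighborFinset v).erase w, (1:ℝ) :=
          Finset.sum_le_sum (fun u _ => hxbound u)
      _ = (((G.neighborFinset v).erase w).card : ℝ) := by rw [Finset.sum_const]; simp
      _ ≤ 2 := hdeg2 v hv
  have hLw : L = ∑ v ∈ Finset.univ.erase w, x v := by
    have := hmv w
    rw [hNw, hxw, mul_one] at this
    exact this.symm
  set S : ℝ := ∑ v ∈ Finset.univ.erase w, t v with hS
  have hL2 : L ^ 2 = ((n : ℝ) - 1) + S := by
    calc L ^ 2 = L * L := sq L
      _ = ∑ v ∈ Finset.univ.erase w, L * x v := by rw [hLw, Finset.mul_sum]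
      _ = ∑ v ∈ Finset.univ.erase w, (1 + t v) :=
          Finset.sum_congr rfl (fun v hv => heq v (Finset.mem_erase.mp hv).1)
      _ = ((n : ℝ) - 1) + S := by
          rw [Finset.sum_add_distrib, Finset.sum_const, nsmul_eq_mul, hcard_eraseR]
          simp [hS]
  have ht6 : ∀ v, v ≠ w → |t v| ≤ 6 / L := by
    intro v hv
    have hxb : ∀ u, u ≠ w → |x u| ≤ 3 / L := by
      intro u hu
      have h1 : x u = (1 + t u) / L := by
        field_simp
        linarith [heq u hu]
      rw [h1, abs_div, abs_of_pos hLpos]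
      have hnum3 : |1 + t u| ≤ 3 := by
        calc |1 + t u| ≤ |(1:ℝ)| + |t u| := abs_add_le _ _
          _ ≤ 3 := by have := ht2 u hu; rw [abs_one]; linarith
      gcongr
    calc |t v| ≤ ∑ u ∈ (G.neighborFinset v).erase w, |x u| := Finset.abs_sum_le_sum_abs _ _
      _ ≤ ∑ _u ∈ (G.neighborFinset v).erase w, (3 / L) := by
          apply Finset.sum_le_sum
          intro u hu
          exact hxb u (Finset.mem_erase.mp hu).1
      _ = (((G.neighborFinset v).erase w).card : ℝ) * (3 / L) := by
          rw [Finset.sum_const]; simp [mul_comm]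
      _ ≤ 2 * (3 / L) := by
          apply mul_le_mul_of_nonneg_right (hdeg2 v hv) (by positivity)
      _ = 6 / L := by ring
  -- double sum
  set R : ℝ := ∑ v ∈ Finset.univ.erase w, ∑ u ∈ (G.neighborFinset v).erase w, t u with hR
  have hhs : (∑ v ∈ Finset.univ.erase w, (((G.neighborFinset v).erase w).card : ℝ)) = 2 * m := by
    have := handshake_aux G w
    rw [← hm] at this
    exact_mod_cast congrArg (Nat.cast : ℕ → ℝ) this
  have hLS : L * S = 2 * m + R := by
    calc L * S = ∑ v ∈ Finset.univ.erase w, L * t v := by rw [hS, Finset.mul_sum]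
      _ = ∑ v ∈ Finset.univ.erase w, ∑ u ∈ (G.neighborFinset v).erase w, L * x u := by
          apply Finset.sum_congr rfl
          intro v _
          rw [ht, Finset.mul_sum]
      _ = ∑ v ∈ Finset.univ.erase w, ∑ u ∈ (G.neighborFinset v).erase w, (1 + t u) := by
          apply Finset.sum_congr rfl
          intro v _
          apply Finset.sum_congr rfl
          intro u hu
          exact heq u (Finset.mem_erase.mp hu).1
      _ = ∑ v ∈ Finset.univ.erase w, ((((G.neighborFinset v).erase w).card : ℝ)
            + ∑ u ∈ (G.neighborFinset v).erase w, t u) := by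
          apply Finset.sum_congr rfl
          intro v _
          rw [Finset.sum_add_distrib, Finset.sum_const]
          simp
      _ = 2 * m + R := by rw [Finset.sum_add_distrib, hhs, hR]
  have hRbound : |R| ≤ 12 * m / L := by
    calc |R| ≤ ∑ v ∈ Finset.univ.erase w, |∑ u ∈ (G.neighborFinset v).erase w, t u| :=
          Finset.abs_sum_le_sum_abs _ _
      _ ≤ ∑ v ∈ Finset.univ.erase w, (((G.neighborFinset v).erase w).card : ℝ) * (6 / L) := by
          apply Finset.sum_le_sum
          intro v _
          calc |∑ u ∈ (G.neighborFinset v).erase w, t u|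
              ≤ ∑ u ∈ (G.neighborFinset v).erase w, |t u| := Finset.abs_sum_le_sum_abs _ _
            _ ≤ ∑ _u ∈ (G.neighborFinset v).erase w, (6 / L) := by
                apply Finset.sum_le_sum
                intro u hu
                exact ht6 u (Finset.mem_erase.mp hu).1
            _ = (((G.neighborFinset v).erase w).card : ℝ) * (6 / L) := by
                rw [Finset.sum_const]; simp [mul_comm]
      _ = (2 * m) * (6 / L) := by rw [← Finset.sum_mul, hhs]
      _ = 12 * m / L := by ring
  -- arithmetic endgame
  have hm0 : (0:ℝ) ≤ m := Nat.cast_nonneg m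
  have hLle' : L ≤ q + 2 := hLle
  have hE : L ^ 3 = q ^ 2 * L + 2 * m + R := by
    have hL2' : L ^ 2 = q ^ 2 + S := by rw [hL2, hq2]
    linear_combination L * hL2' + hLS
  set T : ℝ := L - q - (m : ℝ) / q ^ 2 with hT
  have hq0' : q ≠ 0 := by positivity
  have hden : (0:ℝ) < L * (L + q) * q ^ 2 := by positivity
  have hTden : T * (L * (L + q) * q ^ 2) = R * q ^ 2 - m * (L - q) * (L + 2 * q) := by
    have h0 : (m:ℝ) / q ^ 2 * q ^ 2 = m := div_mul_cancel₀ _ (pow_ne_zero 2 hq0')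
    rw [hT]
    linear_combination q ^ 2 * hE - (L * (L + q)) * h0
  have hnum : |R * q ^ 2 - m * (L - q) * (L + 2 * q)| ≤ 20 * m * q := by
    have h1 : |R * q ^ 2| ≤ 12 * m * q := by
      rw [abs_mul, abs_of_nonneg (sq_nonneg q)]
      calc |R| * q ^ 2 ≤ (12 * m / L) * q ^ 2 :=
            mul_le_mul_of_nonneg_right hRbound (sq_nonneg q)
        _ ≤ 12 * m * q := by
            rw [div_mul_eq_mul_div, div_le_iff₀ hLpos]
            nlinarith [mul_le_mul_of_nonneg_right hqL (mul_nonneg hm0 hq0)]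
    have h2 : |m * (L - q) * (L + 2 * q)| ≤ 8 * m * q := by
      have hLq1 : 0 ≤ L - q := by linarith
      have hLq2 : L - q ≤ 2 := by linarith
      have hpos2 : (0:ℝ) ≤ L + 2 * q := by linarith
      rw [abs_of_nonneg (mul_nonneg (mul_nonneg hm0 hLq1) hpos2)]
      have e1 : (m:ℝ) * (L - q) ≤ (m:ℝ) * 2 := mul_le_mul_of_nonneg_left hLq2 hm0
      have e2 : (m:ℝ) * (L - q) * (L + 2 * q) ≤ (m:ℝ) * 2 * (L + 2 * q) :=
        mul_le_mul_of_nonneg_right e1 hpos2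
      have e3 : (m:ℝ) * 2 * (L + 2 * q) ≤ (m:ℝ) * 2 * (4 * q) :=
        mul_le_mul_of_nonneg_left (by linarith) (by linarith)
      linarith
    calc |R * q ^ 2 - m * (L - q) * (L + 2 * q)|
        ≤ |R * q ^ 2| + |m * (L - q) * (L + 2 * q)| := abs_sub _ _
      _ ≤ 20 * m * q := by linarith
  have hTbound : |T| ≤ 10 * m / q ^ 3 := by
    have habs : |T| * (L * (L + q) * q ^ 2) ≤ 20 * m * q := by
      calc |T| * (L * (L + q) * q ^ 2) = |T * (L * (L + q) * q ^ 2)| := by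
            rw [abs_mul, abs_of_pos hden]
        _ = |R * q ^ 2 - m * (L - q) * (L + 2 * q)| := by rw [hTden]
        _ ≤ 20 * m * q := hnum
    have e : q * (q + q) ≤ L * (L + q) :=
      mul_le_mul hqL (by linarith) (by linarith) (le_of_lt hLpos)
    have hden2 : 2 * q ^ 4 ≤ L * (L + q) * q ^ 2 := by
      nlinarith [mul_le_mul_of_nonneg_right e (sq_nonneg q)]
    rw [le_div_iff₀ (by positivity : (0:ℝ) < q ^ 3)]
    nlinarith [abs_nonneg T, mul_le_mul_of_nonneg_left hden2 (abs_nonneg T), habs, hq_ge]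
  -- convert to the target form
  have hgoal_lhs : |L - q - (m : ℝ) / ((n : ℝ) - 1)| = |T| := by rw [hT, hq2]
  rw [hgoal_lhs]
  refine hTbound.trans ?_
  have hnpos : (0:ℝ) < (n : ℝ) := by linarith
  have hrpow : (n : ℝ) ^ ((3 : ℝ) / 2) = (n : ℝ) * Real.sqrt n := by
    rw [show ((3:ℝ)/2) = 1 + 1/2 by norm_num, Real.rpow_add hnpos, Real.rpow_one,
      Real.sqrt_eq_rpow]
  rw [hrpow]
  have hsqn : Real.sqrt n ≤ 2 * q := by
    have h1 : Real.sqrt n ≤ Real.sqrt (4 * ((n:ℝ) - 1)) := Real.sqrt_le_sqrt (by linarith)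
    have h2 : Real.sqrt (4 * ((n:ℝ) - 1)) = 2 * q := by
      have h4 : Real.sqrt 4 = 2 := by
        rw [show (4:ℝ) = 2^2 by norm_num, Real.sqrt_sq (by norm_num : (0:ℝ) ≤ 2)]
      rw [Real.sqrt_mul (by norm_num : (0:ℝ) ≤ 4), h4, hq]
    rw [h2] at h1
    exact h1
  have hsqn0 : 0 < Real.sqrt n := Real.sqrt_pos.mpr hnpos
  rw [div_le_div_iff₀ (by positivity) (by positivity)]
  have hn2 : (n:ℝ) ≤ 2 * q ^ 2 := by nlinarith
  nlinarith [mul_le_mul hn2 hsqn (le_of_lt hsqn0) (by positivity : (0:ℝ) ≤ 2 * q ^ 2),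
    mul_nonneg hm0 (by positivity : (0:ℝ) ≤ q ^ 3)]
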